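/- arXiv:1809.06474 — 5 statements merged into one kernel-verified Lean document; each statement's English description precedes it below -/
import Mathlib

section
/- Let f : R^d → R be differentiable with L-Lipschitz gradient, and let f_ν(x) = E_u[f(x + ν u)] where u ~ N(0, I_d) and ν > 0. Then for every x, |f_ν(x) − f(x)| ≤ (ν²/2) L d. -/
open MeasureTheory ProbabilityTheory Real
open scoped NNReal ENNReal

noncomputable def stdGaussian (d : ℕ) : Measure (EuclideanSpace ℝ (Fin d)) :=
  (Measure.pi fun _ : Fin d => gaussianReal 0 1).map
    (MeasurableEquiv.toLp 2 (Fin d → ℝ))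

/-! ### Auxiliary lemmas for the proof -/

section GaussianMoments

lemma aux_gauss_density_eq : (gaussianPDF 0 1) = fun x =>
    ((Real.toNNReal (gaussianPDFReal 0 1 x) : ℝ≥0) : ℝ≥0∞) := by
  funext x; rfl

lemma aux_gauss_density_integral (g : ℝ → ℝ) :
    ∫ x, g x ∂(gaussianReal 0 1) = ∫ x, gaussianPDFReal 0 1 x * g x := by
  rw [gaussianReal_of_var_ne_zero _ one_ne_zero]
  rw [aux_gauss_density_eq, integral_withDensity_eq_integral_smul
    ((measurable_gaussianPDFReal 0 1).real_toNNReal) g]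
  congr 1; funext x
  simp [NNReal.smul_def, Real.coe_toNNReal _ (gaussianPDFReal_nonneg 0 1 x)]

lemma aux_gauss_density_integrable_iff (g : ℝ → ℝ) :
    Integrable g (gaussianReal 0 1) ↔ Integrable (fun x => gaussianPDFReal 0 1 x * g x) := by
  rw [gaussianReal_of_var_ne_zero _ one_ne_zero]
  rw [aux_gauss_density_eq, integrable_withDensity_iff_integrable_smul
    ((measurable_gaussianPDFReal 0 1).real_toNNReal)]
  constructor <;> intro hi <;> refine hi.congr (Filter.Eventually.of_forall fun x => ?_) <;>
    simp [NNReal.smul_def, Real.coe_toNNReal _ (gaussianPDFReal_nonneg 0 1 x)]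

lemma aux_gaussianPDFReal_zero_one (x : ℝ) :
    gaussianPDFReal 0 1 x = (√(2 * π))⁻¹ * rexp (-(2⁻¹ : ℝ) * x ^ 2) := by
  rw [gaussianPDFReal]
  congr 1
  · norm_num
  · congr 1
    push_cast
    ring

lemma aux_int_exp_half : ∫ x : ℝ, rexp (-(2⁻¹ : ℝ) * x ^ 2) = √(2 * π) := by
  rw [integral_gaussian]
  norm_num [mul_comm]

lemma aux_integrable_exp_half : Integrable (fun x : ℝ => rexp (-(2⁻¹ : ℝ) * x ^ 2)) :=
  integrable_exp_neg_mul_sq (by norm_num)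

lemma aux_integrable_mul_exp_half : Integrable (fun x : ℝ => x * rexp (-(2⁻¹ : ℝ) * x ^ 2)) :=
  integrable_mul_exp_neg_mul_sq (by norm_num)

lemma aux_integrable_sq_exp_half :
    Integrable (fun x : ℝ => x ^ 2 * rexp (-(2⁻¹ : ℝ) * x ^ 2)) := by
  have h := integrable_rpow_mul_exp_neg_mul_sq (b := 2⁻¹) (by norm_num) (s := 2) (by norm_num)
  refine h.congr (Filter.Eventually.of_forall fun x => ?_)
  beta_reduce
  norm_num [Real.rpow_natCast]

lemma aux_hasDerivAt_negexp (x : ℝ) :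
    HasDerivAt (fun y : ℝ => -rexp (-(2⁻¹ : ℝ) * y ^ 2)) (x * rexp (-(2⁻¹ : ℝ) * x ^ 2)) x := by
  have h1 : HasDerivAt (fun y : ℝ => -(2⁻¹ : ℝ) * y ^ 2) (-(2⁻¹ : ℝ) * (2 * x ^ 1)) x :=
    (hasDerivAt_pow 2 x).const_mul _
  have h2 : HasDerivAt (fun y : ℝ => -rexp (-(2⁻¹ : ℝ) * y ^ 2)) _ x := (h1.exp).neg
  convert h2 using 1
  ring

lemma aux_int_sq_exp_half : ∫ x : ℝ, x ^ 2 * rexp (-(2⁻¹ : ℝ) * x ^ 2) = √(2 * π) := by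
  have hu : ∀ x : ℝ, HasDerivAt (fun y : ℝ => y) 1 x := fun x => hasDerivAt_id x
  have key := integral_mul_deriv_eq_deriv_mul_of_integrable (fun x _ => hu x) (fun x _ => aux_hasDerivAt_negexp x)
    (aux_integrable_sq_exp_half.congr (Filter.Eventually.of_forall fun x => by
      show x ^ 2 * _ = _; simp [Pi.mul_apply]; ring))
    (aux_integrable_exp_half.neg.congr (Filter.Eventually.of_forall fun x => by
      simp [Pi.mul_apply]))
    (aux_integrable_mul_exp_half.neg.congr (Filter.Eventually.of_forall fun x => by
      simp [Pi.mul_apply]))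
  calc ∫ x : ℝ, x ^ 2 * rexp (-(2⁻¹ : ℝ) * x ^ 2)
      = ∫ x : ℝ, x * (x * rexp (-(2⁻¹ : ℝ) * x ^ 2)) := by congr 1; funext x; ring
    _ = - ∫ x : ℝ, (1 : ℝ) * -rexp (-(2⁻¹ : ℝ) * x ^ 2) := key
    _ = ∫ x : ℝ, rexp (-(2⁻¹ : ℝ) * x ^ 2) := by
        rw [← integral_neg]; congr 1; funext x; ring
    _ = √(2 * π) := aux_int_exp_half

lemma aux_sqrt_two_pi_pos : (0 : ℝ) < √(2 * π) :=
  Real.sqrt_pos.mpr (by positivity)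

lemma aux_gauss_integrable_id : Integrable (fun x : ℝ => x) (gaussianReal 0 1) := by
  rw [aux_gauss_density_integrable_iff]
  refine (aux_integrable_mul_exp_half.const_mul (√(2 * π))⁻¹).congr
    (Filter.Eventually.of_forall fun x => ?_)
  beta_reduce; rw [aux_gaussianPDFReal_zero_one]; ring

lemma aux_gauss_integrable_sq : Integrable (fun x : ℝ => x ^ 2) (gaussianReal 0 1) := by
  rw [aux_gauss_density_integrable_iff]
  refine (aux_integrable_sq_exp_half.const_mul (√(2 * π))⁻¹).congr
    (Filter.Eventually.of_forall fun x => ?_)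
  beta_reduce; rw [aux_gaussianPDFReal_zero_one]; ring

lemma aux_gauss_int_id : ∫ x, x ∂(gaussianReal 0 1) = 0 := by
  rw [aux_gauss_density_integral]
  have h := integral_neg_eq_self (fun x : ℝ => gaussianPDFReal 0 1 x * x) volume
  have h2 : ∫ x : ℝ, gaussianPDFReal 0 1 (-x) * (-x)
      = - ∫ x : ℝ, gaussianPDFReal 0 1 x * x := by
    rw [← integral_neg]
    congr 1; funext x
    rw [aux_gaussianPDFReal_zero_one, aux_gaussianPDFReal_zero_one, neg_sq]
    ring
  rw [h2] at h
  linarith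

lemma aux_gauss_int_sq : ∫ x, x ^ 2 ∂(gaussianReal 0 1) = 1 := by
  rw [aux_gauss_density_integral]
  have h : ∫ x : ℝ, gaussianPDFReal 0 1 x * x ^ 2
      = (√(2 * π))⁻¹ * ∫ x : ℝ, x ^ 2 * rexp (-(2⁻¹ : ℝ) * x ^ 2) := by
    rw [← integral_const_mul]
    congr 1; funext x
    beta_reduce; rw [aux_gaussianPDFReal_zero_one]; ring
  rw [h, aux_int_sq_exp_half, inv_mul_cancel₀ aux_sqrt_two_pi_pos.ne']

end GaussianMoments

section PiCoord

lemma aux_measurePreserving_eval {ι : Type*} [Fintype ι] [DecidableEq ι] {α : ι → Type*}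
    [∀ i, MeasurableSpace (α i)] (μ : ∀ i, Measure (α i)) [∀ i, IsProbabilityMeasure (μ i)]
    (i : ι) : MeasurePreserving (Function.eval i) (Measure.pi μ) (μ i) := by
  refine ⟨measurable_pi_apply i, ?_⟩
  ext s hs
  rw [Measure.map_apply (measurable_pi_apply i) hs, Set.eval_preimage, Measure.pi_pi]
  rw [Fintype.prod_eq_single i (fun j hj => by rw [Function.update_of_ne hj]; simp)]
  rw [Function.update_self]

lemma aux_pi_integrable_coord {d : ℕ} (g : ℝ → ℝ) (hg : Integrable g (gaussianReal 0 1))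
    (i : Fin d) :
    Integrable (fun y : Fin d → ℝ => g (y i)) (Measure.pi fun _ : Fin d => gaussianReal 0 1) := by
  have hmp := aux_measurePreserving_eval (fun _ : Fin d => gaussianReal 0 1) i
  have hg2 : Integrable g ((Measure.pi fun _ : Fin d => gaussianReal 0 1).map
      (Function.eval i)) := by rw [hmp.map_eq]; exact hg
  exact (integrable_map_measure (by rw [hmp.map_eq]; exact hg.aestronglyMeasurable)
    hmp.measurable.aemeasurable).mp hg2

lemma aux_pi_integral_coord {d : ℕ} (g : ℝ → ℝ) (hg : AEStronglyMeasurable g (gaussianReal 0 1))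
    (i : Fin d) :
    ∫ y, g (y i) ∂(Measure.pi fun _ : Fin d => gaussianReal 0 1)
      = ∫ t, g t ∂(gaussianReal 0 1) := by
  have hmp := aux_measurePreserving_eval (fun _ : Fin d => gaussianReal 0 1) i
  rw [← integral_map hmp.measurable.aemeasurable (by rw [hmp.map_eq]; exact hg), hmp.map_eq]

end PiCoord

lemma aux_taylor_bound {E : Type*} [NormedAddCommGroup E] [InnerProductSpace ℝ E]
    [CompleteSpace E]
    (f : E → ℝ) (L : ℝ) (hL : 0 ≤ L) (hdiff : Differentiable ℝ f)
    (hlip : ∀ x y, ‖gradient f y - gradient f x‖ ≤ L * ‖y - x‖) (x y : E) :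
    |f y - f x - inner ℝ (gradient f x) (y - x)| ≤ L / 2 * ‖y - x‖ ^ 2 := by
  set v := y - x with hv
  have hgrad_cont : Continuous (gradient f) := by
    have : LipschitzWith (Real.toNNReal L) (gradient f) := by
      apply LipschitzWith.of_dist_le_mul
      intro a b
      rw [dist_eq_norm, dist_eq_norm, Real.coe_toNNReal _ hL]
      exact hlip b a
    exact this.continuous
  have hline : ∀ t : ℝ, HasDerivAt (fun t : ℝ => x + t • v) v t := by
    intro t
    simpa using ((hasDerivAt_id t).smul_const v).const_add x
  have hg : ∀ t : ℝ, HasDerivAt (fun t : ℝ => f (x + t • v))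
      (inner ℝ (gradient f (x + t • v)) v : ℝ) t := by
    intro t
    have hf := (hdiff (x + t • v)).hasGradientAt
    have := hf.hasFDerivAt.comp_hasDerivAt t (hline t)
    rw [InnerProductSpace.toDual_apply_apply] at this; exact this
  set c : ℝ := inner ℝ (gradient f x) v with hc
  have hφ : ∀ t : ℝ, HasDerivAt (fun t : ℝ => f (x + t • v) - t * c)
      (inner ℝ (gradient f (x + t • v) - gradient f x) v : ℝ) t := by
    intro t
    have := (hg t).sub (hasDerivAt_mul_const c)
    rw [inner_sub_left]; exact this
  have hcont : Continuous fun t : ℝ =>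
      (inner ℝ (gradient f (x + t • v) - gradient f x) v : ℝ) := by
    refine Continuous.inner ?_ continuous_const
    exact (hgrad_cont.comp (by continuity)).sub continuous_const
  have hftc := intervalIntegral.integral_eq_sub_of_hasDerivAt
    (f := fun t : ℝ => f (x + t • v) - t * c) (fun t _ => hφ t)
    (hcont.intervalIntegrable 0 1)
  have hval : f y - f x - c
      = ∫ t in (0:ℝ)..1, (inner ℝ (gradient f (x + t • v) - gradient f x) v : ℝ) := by
    rw [hftc]
    simp [hv]
    ring
  rw [hval]
  have hbound : ∀ t ∈ Set.Icc (0:ℝ) 1,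
      |(inner ℝ (gradient f (x + t • v) - gradient f x) v : ℝ)| ≤ L * ‖v‖ ^ 2 * t := by
    intro t ht
    calc |(inner ℝ (gradient f (x + t • v) - gradient f x) v : ℝ)|
        ≤ ‖gradient f (x + t • v) - gradient f x‖ * ‖v‖ := abs_real_inner_le_norm _ _
      _ ≤ (L * ‖x + t • v - x‖) * ‖v‖ := by
          gcongr
          exact hlip x (x + t • v)
      _ = L * ‖v‖ ^ 2 * t := by
          rw [add_sub_cancel_left, norm_smul, Real.norm_eq_abs, abs_of_nonneg ht.1]
          ring
  calc |∫ t in (0:ℝ)..1, (inner ℝ (gradient f (x + t • v) - gradient f x) v : ℝ)|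
      ≤ ∫ t in (0:ℝ)..1, |(inner ℝ (gradient f (x + t • v) - gradient f x) v : ℝ)| :=
        intervalIntegral.abs_integral_le_integral_abs zero_le_one
    _ ≤ ∫ t in (0:ℝ)..1, L * ‖v‖ ^ 2 * t := by
        apply intervalIntegral.integral_mono_on zero_le_one
        · exact (hcont.abs.intervalIntegrable 0 1)
        · exact (continuous_const.mul continuous_id).intervalIntegrable 0 1
        · exact hbound
    _ = L / 2 * ‖v‖ ^ 2 := by
        rw [intervalIntegral.integral_const_mul, integral_id]
        ring

lemma aux_inner_sum {d : ℕ} (a u : EuclideanSpace ℝ (Fin d)) :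
    inner ℝ a u = ∑ i, a i * u i := by
  simp [PiLp.inner_apply, RCLike.inner_apply, conj_trivial, mul_comm]

lemma aux_norm_sq_sum {d : ℕ} (u : EuclideanSpace ℝ (Fin d)) :
    ‖u‖ ^ 2 = ∑ i, (u i) ^ 2 := by
  rw [← real_inner_self_eq_norm_sq, aux_inner_sum]
  simp [sq]

theorem stmt_4 (d : ℕ) (f : EuclideanSpace ℝ (Fin d) → ℝ) (L ν : ℝ) (hν : 0 < ν)
    (hdiff : Differentiable ℝ f)
    (hlip : ∀ x y, ‖gradient f y - gradient f x‖ ≤ L * ‖y - x‖)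
    (x : EuclideanSpace ℝ (Fin d)) :
    |(∫ u, f (x + ν • u) ∂(stdGaussian d)) - f x| ≤ ν ^ 2 / 2 * L * d := by
  haveI hPM : IsProbabilityMeasure (stdGaussian d) := by
    unfold _root_.stdGaussian
    exact Measure.isProbabilityMeasure_map (MeasurableEquiv.measurable _).aemeasurable
  rcases Nat.eq_zero_or_pos d with hd | hd
  · subst hd
    have h0 : ∀ u : EuclideanSpace ℝ (Fin 0), x + ν • u = x := by
      intro u
      have : u = 0 := by ext i; exact i.elim0
      rw [this]; simp
    simp only [h0, integral_const, measure_univ, ENNReal.toReal_one, smul_eq_mul, one_mul]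
    simp
  -- now d ≥ 1, so L ≥ 0
  have hL : 0 ≤ L := by
    have h := hlip 0 (EuclideanSpace.single ⟨0, hd⟩ (1:ℝ))
    rw [sub_zero, EuclideanSpace.norm_single] at h
    simpa using le_trans (norm_nonneg _) h
  set P : Measure (Fin d → ℝ) := Measure.pi fun _ : Fin d => gaussianReal 0 1 with hP
  set eS : (Fin d → ℝ) → EuclideanSpace ℝ (Fin d) :=
    fun y => (MeasurableEquiv.toLp 2 (Fin d → ℝ)) y with heS
  haveI : IsProbabilityMeasure P := by infer_instance
  set a : EuclideanSpace ℝ (Fin d) := gradient f x with ha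
  set c : ℝ := ν ^ 2 / 2 * L with hcdef
  have hc0 : 0 ≤ c := by positivity
  -- pointwise Taylor bound
  have key : ∀ u : EuclideanSpace ℝ (Fin d),
      |f (x + ν • u) - f x - ν * ∑ i, a i * u i| ≤ c * ∑ i, (u i) ^ 2 := by
    intro u
    have h := aux_taylor_bound f L hL hdiff hlip x (x + ν • u)
    rw [add_sub_cancel_left] at h
    have h1 : inner ℝ a (ν • u) = ν * ∑ i, a i * u i := by
      rw [real_inner_smul_right, aux_inner_sum]
    have h2 : ‖(ν:ℝ) • u‖ ^ 2 = ν ^ 2 * ∑ i, (u i) ^ 2 := by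
      rw [norm_smul, mul_pow, aux_norm_sq_sum, Real.norm_eq_abs, sq_abs]
    rw [h1, h2] at h
    calc |f (x + ν • u) - f x - ν * ∑ i, a i * u i| ≤ L / 2 * (ν ^ 2 * ∑ i, (u i) ^ 2) := h
      _ = c * ∑ i, (u i) ^ 2 := by rw [hcdef]; ring
  -- transfer to the pi measure
  have htrans : ∫ u, f (x + ν • u) ∂(stdGaussian d) = ∫ y, f (x + ν • eS y) ∂P := by
    unfold _root_.stdGaussian
    exact integral_map_equiv (MeasurableEquiv.toLp 2 (Fin d → ℝ))
      (fun u => f (x + ν • u))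
  rw [htrans]
  -- decomposition
  set lin : (Fin d → ℝ) → ℝ := fun y => ν * ∑ i, a i * y i with hlin
  set R : (Fin d → ℝ) → ℝ := fun y => f (x + ν • eS y) - f x - lin y with hR
  have hcoord : ∀ (y : Fin d → ℝ) (i : Fin d), (eS y) i = y i := fun y i => rfl
  have hRbound : ∀ y : Fin d → ℝ, |R y| ≤ c * ∑ i, (y i) ^ 2 := by
    intro y
    have := key (eS y)
    simpa [hR, hlin, hcoord] using this
  -- continuity of R
  have heScont : Continuous eS :=
    (PiLp.continuousLinearEquiv 2 ℝ (fun _ : Fin d => ℝ)).symm.continuous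
  have hRcont : Continuous R := by
    apply Continuous.sub
    · apply Continuous.sub
      · exact hdiff.continuous.comp (continuous_const.add (heScont.const_smul ν))
      · exact continuous_const
    · exact continuous_const.mul (continuous_finset_sum _ fun i _ =>
        continuous_const.mul (continuous_apply i))
  -- integrability
  have hIco : ∀ i : Fin d, Integrable (fun y : Fin d → ℝ => y i) P :=
    fun i => aux_pi_integrable_coord (fun t => t) aux_gauss_integrable_id i
  have hIsq : ∀ i : Fin d, Integrable (fun y : Fin d → ℝ => (y i) ^ 2) P :=
    fun i => aux_pi_integrable_coord (fun t => t ^ 2) aux_gauss_integrable_sq i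
  have hIsum : Integrable (fun y : Fin d → ℝ => ∑ i, (y i) ^ 2) P :=
    integrable_finset_sum _ fun i _ => hIsq i
  have hIlin : Integrable lin P := by
    exact (integrable_finset_sum _ fun i _ => (hIco i).const_mul (a i)).const_mul ν
  have hIR : Integrable R P := by
    refine (hIsum.const_mul c).mono' hRcont.aestronglyMeasurable
      (Filter.Eventually.of_forall fun y => ?_)
    rw [Real.norm_eq_abs]
    exact hRbound y
  -- integral of lin is zero
  have hint_coord : ∀ i : Fin d, ∫ y, y i ∂P = 0 := by
    intro i
    rw [aux_pi_integral_coord (fun t => t) aestronglyMeasurable_id i]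
    exact aux_gauss_int_id
  have hlin_int : ∫ y, lin y ∂P = 0 := by
    rw [hlin]
    rw [integral_const_mul, integral_finset_sum _ fun i _ => (hIco i).const_mul (a i)]
    have : ∀ i : Fin d, ∫ y, a i * y i ∂P = 0 := by
      intro i
      rw [integral_const_mul, hint_coord i, mul_zero]
    simp [this]
  -- integral of sum of squares is d
  have hsq_int : ∫ y, (∑ i, (y i) ^ 2) ∂P = d := by
    rw [integral_finset_sum _ fun i _ => hIsq i]
    have : ∀ i : Fin d, ∫ y, (y i) ^ 2 ∂P = 1 := by
      intro i
      rw [aux_pi_integral_coord (fun t => t ^ 2)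
        (continuous_pow 2).aestronglyMeasurable i]
      exact aux_gauss_int_sq
    simp [this]
  -- bound on ∫ R
  have hintR : |∫ y, R y ∂P| ≤ c * d := by
    calc |∫ y, R y ∂P| ≤ ∫ y, |R y| ∂P := by
          rw [← Real.norm_eq_abs]
          refine (norm_integral_le_integral_norm _).trans_eq ?_
          simp [Real.norm_eq_abs]
      _ ≤ ∫ y, c * ∑ i, (y i) ^ 2 ∂P := by
          apply integral_mono hIR.abs (hIsum.const_mul c)
          exact fun y => hRbound y
      _ = c * d := by rw [integral_const_mul, hsq_int]
  -- final computation
  have hdecomp : ∫ y, f (x + ν • eS y) ∂P = f x + (∫ y, lin y ∂P) + ∫ y, R y ∂P := by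
    have hfeq : (fun y : Fin d → ℝ => f (x + ν • eS y))
        = fun y => f x + lin y + R y := by
      funext y
      rw [hR]
      ring
    have h1 : Integrable (fun y : Fin d → ℝ => f x + lin y) P :=
      (integrable_const (f x)).add hIlin
    rw [hfeq, integral_add h1 hIR, integral_add (integrable_const (f x)) hIlin,
      integral_const, probReal_univ]
    simp
  rw [hdecomp, hlin_int]
  simpa [hcdef] using hintR
end

section
/- (Inexact prox solutions are close to exact ones) Let X ⊆ R^d be closed convex, γ > 0, x ∈ X, g ∈ R^d, and let P = P_X(x,g,γ) be the minimizer of u ↦ ⟨g,u⟩ + (γ/2)‖u−x‖² over X. Suppose P^μ ∈ X satisfies ⟨g + γ(P^μ − x), u − P^μ⟩ ≥ −μ for all u ∈ X, for some μ ≥ 0. Then ‖P − P^μ‖² ≤ μ/γ. -/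
open scoped RealInnerProductSpace

theorem stmt_12 (d : ℕ) (X : Set (EuclideanSpace ℝ (Fin d)))
    (hXcl : IsClosed X) (hXcvx : Convex ℝ X) (hXne : X.Nonempty)
    (γ μ : ℝ) (hγ : 0 < γ) (hμ : 0 ≤ μ)
    (x : EuclideanSpace ℝ (Fin d)) (hx : x ∈ X)
    (g P Pμ : EuclideanSpace ℝ (Fin d))
    (hPmem : P ∈ X)
    (hPmin : ∀ u ∈ X, ⟪g, P⟫ + γ / 2 * ‖P - x‖ ^ 2 ≤ ⟪g, u⟫ + γ / 2 * ‖u - x‖ ^ 2)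
    (hPμmem : Pμ ∈ X)
    (hPμ : ∀ u ∈ X, -μ ≤ ⟪g + γ • (Pμ - x), u - Pμ⟫) :
    ‖P - Pμ‖ ^ 2 ≤ μ / γ := by
  set v := Pμ - P with hv
  have key : ∀ t : ℝ, 0 < t → t ≤ 1 → γ * ‖v‖ ^ 2 * (1 - t / 2) ≤ μ := by
    intro t ht0 ht1
    have hmem : P + t • v ∈ X := by
      have h := hXcvx hPmem hPμmem (a := 1 - t) (b := t) (by linarith) ht0.le (by ring)
      have heq : P + t • v = (1 - t) • P + t • Pμ := by
        rw [hv]; module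
      rw [heq]; exact h
    have h1 := hPmin (P + t • v) hmem
    have e1 : (⟪g, P + t • v⟫ : ℝ) = ⟪g, P⟫ + t * ⟪g, v⟫ := by
      rw [inner_add_right, real_inner_smul_right]
    have e2 : ‖P + t • v - x‖ ^ 2 = ‖P - x‖ ^ 2 + 2 * (t * ⟪P - x, v⟫) + t ^ 2 * ‖v‖ ^ 2 := by
      have he : P + t • v - x = (P - x) + t • v := by abel
      rw [he, norm_add_sq_real, real_inner_smul_right, norm_smul]
      rw [mul_pow]
      simp [abs_mul_abs_self, sq_abs]
    rw [e1, e2] at h1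
    have h2 := hPμ P hPmem
    have e3 : (⟪g + γ • (Pμ - x), P - Pμ⟫ : ℝ) = -⟪g, v⟫ - γ * (⟪P - x, v⟫ + ‖v‖ ^ 2) := by
      have hPv : P - Pμ = -v := by rw [hv]; abel
      rw [hPv, inner_neg_right, inner_add_left, real_inner_smul_left]
      have h4 : Pμ - x = (P - x) + v := by rw [hv]; abel
      rw [h4, inner_add_left, real_inner_self_eq_norm_sq]
      ring
    rw [e3] at h2
    nlinarith [mul_le_mul_of_nonneg_left (by linarith : ⟪g, v⟫ + γ * (⟪P - x, v⟫ + ‖v‖ ^ 2) ≤ μ) ht0.le]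
  have hnv : γ * ‖v‖ ^ 2 ≤ μ := by
    by_cases hz : ‖v‖ ^ 2 = 0
    · simpa [hz] using hμ
    · have hpos : 0 < ‖v‖ ^ 2 := lt_of_le_of_ne (sq_nonneg _) (Ne.symm hz)
      refine le_of_forall_pos_le_add ?_
      intro ε hε
      set t := min 1 (2 * ε / (γ * ‖v‖ ^ 2)) with htdef
      have ht0 : 0 < t := lt_min one_pos (by positivity)
      have ht1 : t ≤ 1 := min_le_left _ _
      have hk := key t ht0 ht1
      have ht2 : t ≤ 2 * ε / (γ * ‖v‖ ^ 2) := min_le_right _ _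
      have hsmall : γ * ‖v‖ ^ 2 * (t / 2) ≤ ε := by
        rw [le_div_iff₀ (by positivity : (0:ℝ) < γ * ‖v‖ ^ 2)] at ht2
        nlinarith
      nlinarith
  have hfin : ‖P - Pμ‖ ^ 2 = ‖v‖ ^ 2 := by rw [hv, norm_sub_rev]
  rw [hfin, le_div_iff₀ hγ]
  linarith
end

section
/- (Gradient mapping bounded by Frank–Wolfe gap) Let X be compact convex, f differentiable, γ > 0, and define GP_X(x, ∇f(x), γ) = γ(x − P_X(x, ∇f(x), γ)) with P_X the prox mapping, and g_X(x) = max_{u∈X}⟨∇f(x), x − u⟩. Then ‖GP_X(x, ∇f(x), γ)‖² ≤ γ · g_X(x). Moreover, if ‖∇f(x)‖ ≤ B and diam(X) ≤ D, then g_X(x) ≤ (B/γ + D)‖GP_X(x, ∇f(x), γ)‖. -/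
open scoped RealInnerProductSpace

lemma aux_limit_13 (a c : ℝ) (hc : 0 ≤ c)
    (h : ∀ t : ℝ, 0 < t → t ≤ 1 → -(c * t) ≤ a) : 0 ≤ a := by
  by_contra h'
  push_neg at h'
  rcases eq_or_lt_of_le hc with hc0 | hc0
  · have := h 1 one_pos le_rfl
    nlinarith
  · set t : ℝ := min 1 (-a / (2 * c)) with ht
    have ht0 : 0 < t := lt_min one_pos (div_pos (by linarith) (by linarith))
    have ht1 : t ≤ 1 := min_le_left _ _
    have := h t ht0 ht1
    have h2 : t ≤ -a / (2 * c) := min_le_right _ _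
    have : c * t ≤ c * (-a / (2 * c)) := by
      exact mul_le_mul_of_nonneg_left h2 hc
    have hcc : c * (-a / (2 * c)) = -a / 2 := by field_simp
    nlinarith [h t ht0 ht1]

theorem stmt_13 (d : ℕ) (X : Set (EuclideanSpace ℝ (Fin d)))
    (hXcpt : IsCompact X) (hXcvx : Convex ℝ X) (hXne : X.Nonempty)
    (f : EuclideanSpace ℝ (Fin d) → ℝ) (hdiff : Differentiable ℝ f)
    (γ B D : ℝ) (hγ : 0 < γ)
    (x : EuclideanSpace ℝ (Fin d)) (hx : x ∈ X)
    (P : EuclideanSpace ℝ (Fin d)) (hPmem : P ∈ X)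
    (hPmin : ∀ u ∈ X, ⟪gradient f x, P⟫ + γ / 2 * ‖P - x‖ ^ 2
      ≤ ⟪gradient f x, u⟫ + γ / 2 * ‖u - x‖ ^ 2)
    (xhat : EuclideanSpace ℝ (Fin d)) (hxhat : xhat ∈ X)
    (hargmin : ∀ u ∈ X, ⟪gradient f x, xhat⟫ ≤ ⟪gradient f x, u⟫)
    (hB : ‖gradient f x‖ ≤ B)
    (hD : ∀ a ∈ X, ∀ b ∈ X, ‖a - b‖ ≤ D) :
    ‖γ • (x - P)‖ ^ 2 ≤ γ * ⟪gradient f x, x - xhat⟫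
    ∧ ⟪gradient f x, x - xhat⟫ ≤ (B / γ + D) * ‖γ • (x - P)‖ := by
  set g := gradient f x with hg
  -- variational inequality
  have vi : ∀ u ∈ X, 0 ≤ ⟪g, u - P⟫ + γ * ⟪P - x, u - P⟫ := by
    intro u hu
    apply aux_limit_13 _ (γ / 2 * ‖u - P‖ ^ 2) (by positivity)
    intro t ht0 ht1
    have hmem : P + t • (u - P) ∈ X := by
      have : P + t • (u - P) = (1 - t) • P + t • u := by
        simp [smul_sub, sub_smul]; abel
      rw [this]
      exact hXcvx hPmem hu (by linarith) ht0.le (by ring)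
    have := hPmin _ hmem
    have e1 : ⟪g, P + t • (u - P)⟫ = ⟪g, P⟫ + t * ⟪g, u - P⟫ := by
      rw [inner_add_right, real_inner_smul_right]
    have e2 : ‖P + t • (u - P) - x‖ ^ 2
        = ‖P - x‖ ^ 2 + 2 * (t * ⟪P - x, u - P⟫) + t ^ 2 * ‖u - P‖ ^ 2 := by
      have : P + t • (u - P) - x = (P - x) + t • (u - P) := by abel
      rw [this, norm_add_sq_real, real_inner_smul_right, norm_smul,
        Real.norm_eq_abs, abs_of_pos ht0, mul_pow]
    rw [e1, e2] at this
    have key : 0 ≤ t * ⟪g, u - P⟫ + γ * (t * ⟪P - x, u - P⟫)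
        + γ / 2 * (t ^ 2 * ‖u - P‖ ^ 2) := by nlinarith
    have ht0' : 0 < t := ht0
    nlinarith [key, sq_nonneg t]
  have vix := vi x hx
  have vih := vi xhat hxhat
  have hPx : ⟪P - x, x - P⟫ = -‖x - P‖ ^ 2 := by
    have : P - x = -(x - P) := by abel
    rw [this, inner_neg_left, real_inner_self_eq_norm_sq]
  rw [hPx] at vix
  -- γ ‖x - P‖² ≤ ⟪g, x - P⟫
  have h1 : γ * ‖x - P‖ ^ 2 ≤ ⟪g, x - P⟫ := by nlinarith
  have h2 : ⟪g, x - P⟫ ≤ ⟪g, x - xhat⟫ := by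
    have := hargmin P hPmem
    simp only [inner_sub_right]
    linarith
  have hnorm : ‖γ • (x - P)‖ = γ * ‖x - P‖ := by
    rw [norm_smul, Real.norm_eq_abs, abs_of_pos hγ]
  constructor
  · rw [hnorm]
    nlinarith
  · -- second part
    have cs1 : ⟪g, x - P⟫ ≤ B * ‖x - P‖ := by
      calc ⟪g, x - P⟫ ≤ ‖g‖ * ‖x - P‖ := real_inner_le_norm g _
        _ ≤ B * ‖x - P‖ := by
            apply mul_le_mul_of_nonneg_right hB (norm_nonneg _)
    have cs2 : ⟪g, P - xhat⟫ ≤ γ * (D * ‖x - P‖) := by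
      have e3 : ⟪P - x, xhat - P⟫ = ⟪x - P, P - xhat⟫ := by
        have h1 : P - x = -(x - P) := by abel
        have h2 : xhat - P = -(P - xhat) := by abel
        rw [h1, h2, inner_neg_neg]
      have e4 : ⟪g, xhat - P⟫ = -⟪g, P - xhat⟫ := by
        have : xhat - P = -(P - xhat) := by abel
        rw [this, inner_neg_right]
      rw [e3, e4] at vih
      have cs : ⟪x - P, P - xhat⟫ ≤ ‖x - P‖ * ‖P - xhat‖ := real_inner_le_norm _ _
      have hd : ‖P - xhat‖ ≤ D := hD P hPmem xhat hxhat
      calc ⟪g, P - xhat⟫ ≤ γ * ⟪x - P, P - xhat⟫ := by linarith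
        _ ≤ γ * (‖x - P‖ * ‖P - xhat‖) := mul_le_mul_of_nonneg_left cs hγ.le
        _ ≤ γ * (‖x - P‖ * D) := by
            exact mul_le_mul_of_nonneg_left
              (mul_le_mul_of_nonneg_left hd (norm_nonneg _)) hγ.le
        _ = γ * (D * ‖x - P‖) := by ring
    have split : ⟪g, x - xhat⟫ = ⟪g, x - P⟫ + ⟪g, P - xhat⟫ := by
      rw [← inner_add_right]
      congr 1
      abel
    rw [split, hnorm]
    have hrhs : (B / γ + D) * (γ * ‖x - P‖) = B * ‖x - P‖ + γ * (D * ‖x - P‖) := by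
      field_simp
    rw [hrhs]
    linarith
end

section
/- (Optimality conditions of the cubic subproblem) Let g ∈ R^d, H a symmetric d×d matrix, y ∈ R^d, α > 0, and let x̄ minimize x ↦ ⟨g, x−y⟩ + (1/2)⟨H(x−y), x−y⟩ + (α/6)‖x−y‖³ over R^d. Then g + H(x̄ − y) + (α/2)‖x̄ − y‖(x̄ − y) = 0 and H + (α/2)‖x̄ − y‖ I_d is positive semidefinite. -/
open scoped RealInnerProductSpace

private lemma cube_aux (ρ r b : ℝ) (hρ : 0 ≤ ρ) (hr : 0 ≤ r) (hb : 0 ≤ b)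
    (h : ρ^2 = r^2 + b^2) : ρ^3 ≤ r^3 + 3/2*r*b^2 + b^3 := by
  have hrb : ρ ≤ r + b := by nlinarith [sq_nonneg (ρ - r - b), mul_nonneg hr hb]
  nlinarith [mul_nonneg hr hb, mul_nonneg (mul_nonneg hr hb) hb, sq_nonneg (ρ - r),
    mul_nonneg (mul_nonneg hr hr) hb, sq_nonneg b]

private lemma limit_aux {Q c : ℝ} (hc : 0 < c) (h : ∀ t : ℝ, 0 < t → -c * t ≤ Q) :
    0 ≤ Q := by
  by_contra h0
  push_neg at h0
  have ht : 0 < -Q / (2 * c) := div_pos (by linarith) (by linarith)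
  have hcl := h _ ht
  have heq : -c * (-Q / (2 * c)) = Q / 2 := by field_simp
  rw [heq] at hcl
  linarith

set_option maxHeartbeats 1000000 in
theorem stmt_17 (d : ℕ) (g y : EuclideanSpace ℝ (Fin d))
    (H : EuclideanSpace ℝ (Fin d) →L[ℝ] EuclideanSpace ℝ (Fin d))
    (hsym : ∀ v w, ⟪H v, w⟫ = ⟪v, H w⟫)
    (α : ℝ) (hα : 0 < α)
    (xbar : EuclideanSpace ℝ (Fin d))
    (hmin : ∀ x, ⟪g, xbar - y⟫ + 1 / 2 * ⟪H (xbar - y), xbar - y⟫ + α / 6 * ‖xbar - y‖ ^ 3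
      ≤ ⟪g, x - y⟫ + 1 / 2 * ⟪H (x - y), x - y⟫ + α / 6 * ‖x - y‖ ^ 3) :
    g + H (xbar - y) + (α / 2 * ‖xbar - y‖) • (xbar - y) = 0
    ∧ ∀ v, 0 ≤ ⟪H v, v⟫ + α / 2 * ‖xbar - y‖ * ‖v‖ ^ 2 := by
  set s : EuclideanSpace ℝ (Fin d) := xbar - y with hs
  -- first-order condition, directional form
  have key : ∀ v, ⟪g, v⟫ + ⟪H s, v⟫ + (α / 2 * ‖s‖) * ⟪s, v⟫ = 0 := by
    have hsub : HasFDerivAt (fun x : EuclideanSpace ℝ (Fin d) => x - y)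
        (ContinuousLinearMap.id ℝ (EuclideanSpace ℝ (Fin d))) xbar :=
      (hasFDerivAt_id xbar).sub_const y
    have h1 : HasFDerivAt (fun x : EuclideanSpace ℝ (Fin d) => ⟪g, x - y⟫)
        ((innerSL ℝ g).comp (ContinuousLinearMap.id ℝ _)) xbar :=
      ((innerSL ℝ g).hasFDerivAt).comp xbar hsub
    have hHxy : HasFDerivAt (fun x : EuclideanSpace ℝ (Fin d) => H (x - y))
        (H.comp (ContinuousLinearMap.id ℝ _)) xbar :=
      (H.hasFDerivAt).comp xbar hsub
    have h2 : HasFDerivAt (fun x : EuclideanSpace ℝ (Fin d) => ⟪H (x - y), x - y⟫)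
        ((fderivInnerCLM ℝ (H s, s)).comp ((H.comp (ContinuousLinearMap.id ℝ _)).prod
          (ContinuousLinearMap.id ℝ _))) xbar :=
      hHxy.inner (𝕜 := ℝ) hsub
    have h3 : HasFDerivAt (fun x : EuclideanSpace ℝ (Fin d) => ‖x - y‖ ^ (3:ℕ))
        ((((3:ℝ) * ‖s‖ ^ ((3:ℝ) - 2)) • innerSL ℝ s).comp (ContinuousLinearMap.id ℝ _)) xbar := by
      have he : (fun x : EuclideanSpace ℝ (Fin d) => ‖x - y‖ ^ (3:ℕ))
          = fun x : EuclideanSpace ℝ (Fin d) => ‖x - y‖ ^ (3:ℝ) := by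
        ext x; rw [← Real.rpow_natCast (‖x - y‖) 3]; norm_num
      rw [he]
      exact (hasFDerivAt_norm_rpow s (by norm_num : (1:ℝ) < 3)).comp xbar hsub
    have hf : HasFDerivAt (fun x : EuclideanSpace ℝ (Fin d) =>
        ⟪g, x - y⟫ + 1 / 2 * ⟪H (x - y), x - y⟫ + α / 6 * ‖x - y‖ ^ 3) _ xbar :=
      (h1.add (h2.const_mul (1/2))).add (h3.const_mul (α/6))
    have hloc : IsLocalMin (fun x : EuclideanSpace ℝ (Fin d) =>
        ⟪g, x - y⟫ + 1 / 2 * ⟪H (x - y), x - y⟫ + α / 6 * ‖x - y‖ ^ 3) xbar :=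
      Filter.Eventually.of_forall hmin
    have hD := hloc.hasFDerivAt_eq_zero hf
    intro v
    have hv := congrFun (congrArg DFunLike.coe hD) v
    simp only [ContinuousLinearMap.add_apply, ContinuousLinearMap.coe_comp', Function.comp_apply,
      ContinuousLinearMap.smul_apply, ContinuousLinearMap.coe_id', id_eq, fderivInnerCLM_apply,
      ContinuousLinearMap.prod_apply, innerSL_apply_apply, ContinuousLinearMap.zero_apply,
      smul_eq_mul] at hv
    rw [hsym v s] at hv
    have h32 : ‖s‖ ^ ((3:ℝ) - 2) = ‖s‖ := by norm_num
    rw [h32] at hv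
    have hc : ⟪v, H s⟫ = ⟪H s, v⟫ := by rw [real_inner_comm]
    linarith [hv, hc]
  -- part 1
  have part1 : g + H s + (α / 2 * ‖s‖) • s = 0 := by
    set w : EuclideanSpace ℝ (Fin d) := g + H s + (α / 2 * ‖s‖) • s with hw
    have hww : ⟪w, w⟫ = 0 := by
      have h := key w
      rw [hw, inner_add_left, inner_add_left, real_inner_smul_left]
      linarith [h]
    exact inner_self_eq_zero.mp hww
  refine ⟨part1, ?_⟩
  -- expansion of the minimality condition along s + t • u
  have hexp : ∀ (t : ℝ) (u : EuclideanSpace ℝ (Fin d)),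
      0 ≤ t * (⟪g, u⟫ + ⟪H s, u⟫) + t^2/2 * ⟪H u, u⟫
        + α/6 * (‖s + t • u‖ ^ 3 - ‖s‖ ^ 3) := by
    intro t u
    have h := hmin (xbar + t • u)
    have hxy : xbar + t • u - y = s + t • u := by rw [hs]; abel
    rw [hxy] at h
    have e1 : ⟪g, s + t • u⟫ = ⟪g, s⟫ + t * ⟪g, u⟫ := by
      rw [inner_add_right, real_inner_smul_right]
    have hus : ⟪H u, s⟫ = ⟪H s, u⟫ := by
      rw [hsym u s]; rw [real_inner_comm]
    have e2 : ⟪H (s + t • u), s + t • u⟫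
        = ⟪H s, s⟫ + 2*t*⟪H s, u⟫ + t^2*⟪H u, u⟫ := by
      have hHadd : H (s + t • u) = H s + t • H u := by rw [map_add, map_smul]
      rw [hHadd, inner_add_left, inner_add_right, inner_add_right, real_inner_smul_left,
        real_inner_smul_right, real_inner_smul_right, real_inner_smul_left, hus]
      ring
    rw [e1, e2] at h
    linarith [h]
  intro v
  rcases eq_or_ne v 0 with rfl | hv0
  · simp
  have hvpos : (0:ℝ) < ‖v‖ := norm_pos_iff.mpr hv0
  rcases eq_or_ne (⟪s, v⟫) 0 with hc | hc
  · -- degenerate direction: limit argument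
    have claim : ∀ t : ℝ, 0 < t →
        -(α/3*‖v‖^3) * t ≤ ⟪H v, v⟫ + α / 2 * ‖s‖ * ‖v‖ ^ 2 := by
      intro t ht
      have h := hexp t v
      have hk := key v
      rw [hc, mul_zero, add_zero] at hk
      have hρ2 : ‖s + t • v‖ ^ 2 = ‖s‖^2 + (t*‖v‖)^2 := by
        rw [norm_add_sq_real, real_inner_smul_right, hc, norm_smul]
        rw [Real.norm_eq_abs, abs_of_pos ht]
        ring
      have hcube : ‖s + t • v‖ ^ 3 ≤ ‖s‖^3 + 3/2*‖s‖*(t*‖v‖)^2 + (t*‖v‖)^3 :=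
        cube_aux _ _ _ (norm_nonneg _) (norm_nonneg _)
          (by positivity) hρ2
      have hcube' := mul_le_mul_of_nonneg_left hcube (by positivity : (0:ℝ) ≤ α/6)
      have ht2 : (0:ℝ) < t^2 := by positivity
      rw [hk] at h
      have hmain : 0 ≤ t^2/2 * (⟪H v, v⟫ + α / 2 * ‖s‖ * ‖v‖ ^ 2 + α/3*‖v‖^3 * t) := by
        nlinarith [h, hcube']
      nlinarith [hmain, ht2]
    have hcpos : (0:ℝ) < α/3*‖v‖^3 := by positivity
    exact limit_aux hcpos (fun t ht => by simpa [mul_comm] using claim t ht)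
  · -- reflection argument
    obtain ⟨c, hcd⟩ : ∃ c : ℝ, ⟪s, v⟫ = c := ⟨_, rfl⟩
    rw [hcd] at hc
    have ht0 : (-2*c/‖v‖^2) ≠ 0 := by
      apply div_ne_zero _ (by positivity)
      simpa using hc
    have hrel : (-2*c/‖v‖^2) * ‖v‖^2 = -2*c := by field_simp
    have hρ2 : ‖s + (-2*c/‖v‖^2) • v‖ ^ 2 = ‖s‖^2 := by
      rw [norm_add_sq_real, real_inner_smul_right, hcd, norm_smul, Real.norm_eq_abs]
      have habs : |(-2*c/‖v‖^2)|^2 * ‖v‖^2 = (-2*c/‖v‖^2)^2 * ‖v‖^2 := by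
        rw [sq_abs]
      have e := congrArg (fun x => (-2*c/‖v‖^2) * x) hrel
      nlinarith [habs, e]
    have hρ : ‖s + (-2*c/‖v‖^2) • v‖ = ‖s‖ := by
      have h1 : ‖s + (-2*c/‖v‖^2) • v‖ = Real.sqrt (‖s + (-2*c/‖v‖^2) • v‖^2) :=
        (Real.sqrt_sq (norm_nonneg _)).symm
      rw [h1, hρ2, Real.sqrt_sq (norm_nonneg _)]
    have h := hexp (-2*c/‖v‖^2) v
    rw [hρ] at h
    have hk := key v
    rw [hcd] at hk
    have hX : ⟪g, v⟫ + ⟪H s, v⟫ = -(α / 2 * ‖s‖ * c) := by linarith [hk]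
    rw [hX] at h
    have ht2 : (0:ℝ) < (-2*c/‖v‖^2)^2 :=
      lt_of_le_of_ne (sq_nonneg _) (Ne.symm (pow_ne_zero 2 ht0))
    have e3 : α/2*‖s‖*((-2*c/‖v‖^2)*((-2*c/‖v‖^2) * ‖v‖^2))
        = α/2*‖s‖*((-2*c/‖v‖^2)*(-2*c)) := by rw [hrel]
    have hmain : 0 ≤ (-2*c/‖v‖^2)^2/2 * (⟪H v, v⟫ + α / 2 * ‖s‖ * ‖v‖ ^ 2) := by
      nlinarith [h, e3]
    nlinarith [hmain, ht2]
end

section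
/- (Cubic model decrease) With the setup of the cubic subproblem, if x̄ minimizes f̃(x) = ⟨g, x−y⟩ + (1/2)⟨H(x−y), x−y⟩ + (α/6)‖x−y‖³, then f̃(x̄) = −(1/2)⟨H(x̄−y), x̄−y⟩ − (α/3)‖x̄−y‖³ ≤ −(α/12)‖x̄−y‖³. -/
open scoped RealInnerProductSpace

private lemma stmt_18_aux (x K : ℝ) (hK : 0 ≤ K)
    (h : ∀ ε : ℝ, 0 < ε → ε < 1 → |x| ≤ K * ε) : x = 0 := by
  by_contra hx
  have h0 : 0 < |x| := abs_pos.mpr hx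
  have hden : (0:ℝ) < 2 * K + 1 := by linarith
  set ε : ℝ := min (1/2) (|x| / (2 * K + 1)) with hεdef
  have hy0 : 0 ≤ |x| / (2 * K + 1) := div_nonneg h0.le hden.le
  have hε : 0 < ε := lt_min (by norm_num) (div_pos h0 hden)
  have hε1 : ε < 1 := lt_of_le_of_lt (min_le_left _ _) (by norm_num)
  have hεle : ε ≤ |x| / (2 * K + 1) := min_le_right _ _
  have h1 := h ε hε hε1
  have h2 : K * ε ≤ K * (|x| / (2 * K + 1)) :=
    mul_le_mul_of_nonneg_left hεle hK
  have hy : |x| = (2 * K + 1) * (|x| / (2 * K + 1)) := by field_simp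
  have h3 : K * (|x| / (2 * K + 1)) ≤ |x| / 2 := by
    nlinarith [hy, hy0]
  linarith

theorem stmt_18 (d : ℕ) (g y : EuclideanSpace ℝ (Fin d))
    (H : EuclideanSpace ℝ (Fin d) →L[ℝ] EuclideanSpace ℝ (Fin d))
    (hsym : ∀ v w, ⟪H v, w⟫ = ⟪v, H w⟫)
    (α : ℝ) (hα : 0 < α)
    (xbar : EuclideanSpace ℝ (Fin d))
    (hmin : ∀ x, ⟪g, xbar - y⟫ + 1 / 2 * ⟪H (xbar - y), xbar - y⟫ + α / 6 * ‖xbar - y‖ ^ 3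
      ≤ ⟪g, x - y⟫ + 1 / 2 * ⟪H (x - y), x - y⟫ + α / 6 * ‖x - y‖ ^ 3) :
    ⟪g, xbar - y⟫ + 1 / 2 * ⟪H (xbar - y), xbar - y⟫ + α / 6 * ‖xbar - y‖ ^ 3
      = -(1 / 2) * ⟪H (xbar - y), xbar - y⟫ - α / 3 * ‖xbar - y‖ ^ 3
    ∧ ⟪g, xbar - y⟫ + 1 / 2 * ⟪H (xbar - y), xbar - y⟫ + α / 6 * ‖xbar - y‖ ^ 3
      ≤ -(α / 12) * ‖xbar - y‖ ^ 3 := by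
  set s : EuclideanSpace ℝ (Fin d) := xbar - y with hs
  set a : ℝ := ⟪g, s⟫ with ha
  set b : ℝ := ⟪H s, s⟫ with hb
  set c : ℝ := α / 6 * ‖s‖ ^ 3 with hc
  have hc0 : 0 ≤ c := by
    have h1 : (0:ℝ) ≤ ‖s‖ ^ 3 := by positivity
    have h2 : (0:ℝ) ≤ α / 6 := by linarith
    exact mul_nonneg h2 h1
  -- Key: restriction of the model to the line through y and xbar
  have key : ∀ t : ℝ, a + 1 / 2 * b + c ≤ t * a + t ^ 2 * (1 / 2 * b) + |t| ^ 3 * c := by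
    intro t
    have h := hmin (y + t • s)
    have hxy : y + t • s - y = t • s := by abel
    rw [hxy] at h
    have h1 : ⟪g, t • s⟫ = t * a := real_inner_smul_right g s t
    have h2 : ⟪H (t • s), t • s⟫ = t * (t * b) := by
      rw [map_smul, real_inner_smul_left, real_inner_smul_right]
    have h3 : ‖t • s‖ ^ 3 = |t| ^ 3 * ‖s‖ ^ 3 := by
      rw [norm_smul, Real.norm_eq_abs, mul_pow]
    rw [h1, h2, h3] at h
    calc a + 1 / 2 * b + c ≤ t * a + 1 / 2 * (t * (t * b)) + α / 6 * (|t| ^ 3 * ‖s‖ ^ 3) := h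
      _ = t * a + t ^ 2 * (1 / 2 * b) + |t| ^ 3 * c := by rw [hc]; ring
  -- a ≤ 0 from t = -1
  have hneg : a ≤ 0 := by
    have h := key (-1)
    rw [show |(-1:ℝ)| = 1 by norm_num] at h
    nlinarith [h]
  -- first-order condition along the line: a + b + 3c = 0
  have hfoc : a + b + 3 * c = 0 := by
    have hK0 : 0 ≤ |b| / 2 + 4 * c := by
      have := abs_nonneg b; linarith
    set K : ℝ := |b| / 2 + 4 * c with hK
    have hbd : ∀ ε : ℝ, 0 < ε → ε < 1 → |a + b + 3 * c| ≤ K * ε := by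
      intro ε hε hε1
      have hup := key (1 + ε)
      have hdn := key (1 - ε)
      rw [show |1 + ε| = 1 + ε by rw [abs_of_pos]; linarith] at hup
      rw [show |1 - ε| = 1 - ε by rw [abs_of_pos]; linarith] at hdn
      have e1 : (1 + ε) * a + (1 + ε) ^ 2 * (1 / 2 * b) + (1 + ε) ^ 3 * c
          - (a + 1 / 2 * b + c)
          = ε * (a + b + 3 * c + ε * (b / 2 + 3 * c) + ε ^ 2 * c) := by ring
      have e2 : (1 - ε) * a + (1 - ε) ^ 2 * (1 / 2 * b) + (1 - ε) ^ 3 * c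
          - (a + 1 / 2 * b + c)
          = -ε * (a + b + 3 * c - ε * (b / 2) - (3 * ε - ε ^ 2) * c) := by ring
      have hup' : 0 ≤ ε * (a + b + 3 * c + ε * (b / 2 + 3 * c) + ε ^ 2 * c) := by
        linarith [hup, e1]
      have hdn' : 0 ≤ -ε * (a + b + 3 * c - ε * (b / 2) - (3 * ε - ε ^ 2) * c) := by
        linarith [hdn, e2]
      have h2 : 0 ≤ a + b + 3 * c + ε * (b / 2 + 3 * c) + ε ^ 2 * c :=
        nonneg_of_mul_nonneg_right hup' hε
      have h4 : a + b + 3 * c - ε * (b / 2) - (3 * ε - ε ^ 2) * c ≤ 0 := by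
        have h4' : ε * (a + b + 3 * c - ε * (b / 2) - (3 * ε - ε ^ 2) * c) ≤ 0 := by
          linarith [hdn']
        exact nonpos_of_mul_nonpos_right h4' hε
      have hb1 : ε * b ≤ ε * |b| :=
        mul_le_mul_of_nonneg_left (le_abs_self b) hε.le
      have hb2 : ε * (-|b|) ≤ ε * b :=
        mul_le_mul_of_nonneg_left (neg_abs_le b) hε.le
      have hec : 0 ≤ ε * c := mul_nonneg hε.le hc0
      have he2c : ε ^ 2 * c ≤ ε * c := by
        have hee : ε ^ 2 ≤ ε := by nlinarith
        exact mul_le_mul_of_nonneg_right hee hc0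
      have he2c0 : 0 ≤ ε ^ 2 * c := by positivity
      rw [abs_le, hK]
      constructor <;> linarith [h2, h4, hb1, hb2, hec, he2c, he2c0]
    exact stmt_18_aux _ K hK0 hbd
  constructor
  · calc a + 1 / 2 * b + α / 6 * ‖s‖ ^ 3 = a + 1/2 * b + c := by rw [hc]
      _ = -(1/2) * b - 2 * c := by linarith
      _ = -(1 / 2) * b - α / 3 * ‖s‖ ^ 3 := by rw [hc]; ring
  · calc a + 1 / 2 * b + α / 6 * ‖s‖ ^ 3 = a + 1/2 * b + c := by rw [hc]
      _ ≤ -(1/2) * c := by linarith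
      _ = -(α / 12) * ‖s‖ ^ 3 := by rw [hc]; ring
end
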